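/- If n > m ≥ 0, 1 ≤ d ≤ 9, k ≥ 2 and B_n − B_m = d·(10^k − 1)/9, then |1 − α^(−n)·10^k·(4d√2/9)| < 4/α^(n−m), where α = 3 + 2√2. -/
import Mathlib

def B : ℕ → ℤ
  | 0 => 0
  | 1 => 1
  | n + 2 => 6 * B (n + 1) - B n

lemma B_rec (n : ℕ) : B (n + 1 + 1) = 6 * B (n + 1) - B n := rfl

lemma binet (n : ℕ) : (B n : ℝ) * (4 * Real.sqrt 2) =
    (3 + 2 * Real.sqrt 2) ^ n - (3 - 2 * Real.sqrt 2) ^ n := by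
  have hs2 : Real.sqrt 2 ^ 2 = 2 := Real.sq_sqrt (by norm_num)
  have key : ∀ n : ℕ, ((B n : ℝ) * (4 * Real.sqrt 2) =
      (3 + 2 * Real.sqrt 2) ^ n - (3 - 2 * Real.sqrt 2) ^ n) ∧
      ((B (n+1) : ℝ) * (4 * Real.sqrt 2) =
      (3 + 2 * Real.sqrt 2) ^ (n+1) - (3 - 2 * Real.sqrt 2) ^ (n+1)) := by
    intro n
    induction n with
    | zero =>
      constructor
      · simp [B]
      · show ((B 1 : ℝ)) * _ = _
        simp only [B]
        push_cast
        ring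
    | succ n ih =>
      refine ⟨ih.2, ?_⟩
      have h2 : (B (n+1+1) : ℝ) = 6 * (B (n+1) : ℝ) - (B n : ℝ) := by
        rw [B_rec]; push_cast; ring
      rw [h2]
      have h0 := ih.1
      have h1 := ih.2
      set s := Real.sqrt 2
      linear_combination 6*h1 - h0 - (4*((3+2*s)^n - (3-2*s)^n)) * hs2
  exact (key n).1

lemma Bmod5 (n : ℕ) : (B n : ZMod 5) = 0 ∨ (B n : ZMod 5) = 1 ∨ (B n : ZMod 5) = 4 := by
  have key : ∀ n : ℕ,
      ((B n : ZMod 5), (B (n+1) : ZMod 5)) = (0,1) ∨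
      ((B n : ZMod 5), (B (n+1) : ZMod 5)) = (1,1) ∨
      ((B n : ZMod 5), (B (n+1) : ZMod 5)) = (1,0) ∨
      ((B n : ZMod 5), (B (n+1) : ZMod 5)) = (0,4) ∨
      ((B n : ZMod 5), (B (n+1) : ZMod 5)) = (4,4) ∨
      ((B n : ZMod 5), (B (n+1) : ZMod 5)) = (4,0) := by
    intro n
    induction n with
    | zero => left; simp [B]
    | succ n ih =>
      have h2 : (B (n+1+1) : ZMod 5) = 6 * (B (n+1) : ZMod 5) - (B n : ZMod 5) := by
        rw [B_rec]; push_cast; ring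
      rcases ih with h|h|h|h|h|h <;>
        rw [Prod.mk.injEq] at h <;>
        rw [h2, h.1, h.2] <;> decide
  rcases key n with h|h|h|h|h|h <;> rw [Prod.mk.injEq] at h <;> simp [h.1]

lemma Bmod6 (n : ℕ) : (B n : ZMod 6) = 0 ∨ (B n : ZMod 6) = 1 ∨ (B n : ZMod 6) = 5 := by
  have key : ∀ n : ℕ,
      ((B n : ZMod 6), (B (n+1) : ZMod 6)) = (0,1) ∨
      ((B n : ZMod 6), (B (n+1) : ZMod 6)) = (1,0) ∨
      ((B n : ZMod 6), (B (n+1) : ZMod 6)) = (0,5) ∨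
      ((B n : ZMod 6), (B (n+1) : ZMod 6)) = (5,0) := by
    intro n
    induction n with
    | zero => left; simp [B]
    | succ n ih =>
      have h2 : (B (n+1+1) : ZMod 6) = 6 * (B (n+1) : ZMod 6) - (B n : ZMod 6) := by
        rw [B_rec]; push_cast; ring
      rcases ih with h|h|h|h <;>
        rw [Prod.mk.injEq] at h <;>
        rw [h2, h.1, h.2] <;> decide
  rcases key n with h|h|h|h <;> rw [Prod.mk.injEq] at h <;> simp [h.1]

lemma pow10_mod6 (k : ℕ) (hk : 1 ≤ k) : (10 : ZMod 6) ^ k = 4 := by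
  induction k with
  | zero => omega
  | succ k ih =>
    rcases Nat.eq_or_lt_of_le hk with h | h
    · simp [← h]; rfl
    · rw [pow_succ, ih (by omega)]; decide

theorem balancing_linear_form_one (n m k : ℕ) (d : ℤ)
    (hmn : m < n) (hd1 : 1 ≤ d) (hd9 : d ≤ 9) (hk : 2 ≤ k)
    (heq : 9 * (B n - B m) = d * (10 ^ k - 1)) :
    |1 - (3 + 2 * Real.sqrt 2) ^ (-(n : ℤ)) * 10 ^ k * (4 * (d : ℝ) * Real.sqrt 2 / 9)| <
      4 / (3 + 2 * Real.sqrt 2) ^ (n - m) := by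
  set s := Real.sqrt 2 with hs
  have hs2 : s ^ 2 = 2 := Real.sq_sqrt (by norm_num)
  have hs0 : 0 ≤ s := Real.sqrt_nonneg 2
  have hslb : 1.414 < s := by nlinarith
  have hsub : s < 1.415 := by nlinarith
  set a : ℝ := 3 + 2 * s with ha
  set b : ℝ := 3 - 2 * s with hb
  have ha1 : (1:ℝ) < a := by rw [ha]; linarith
  have ha0 : (0:ℝ) < a := by linarith
  have hb0 : (0:ℝ) < b := by rw [hb]; linarith
  have hb1 : b < 0.2 := by rw [hb]; linarith
  have han : (0:ℝ) < a ^ n := pow_pos ha0 n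
  have hanm : (0:ℝ) < a ^ (n - m) := pow_pos ha0 _
  have ham : (0:ℝ) < a ^ m := pow_pos ha0 m
  have ham1 : (1:ℝ) ≤ a ^ m := one_le_pow₀ ha1.le
  have hBn : (B n : ℝ) * (4 * s) = a ^ n - b ^ n := by
    rw [ha, hb, hs]; exact binet n
  have hBm : (B m : ℝ) * (4 * s) = a ^ m - b ^ m := by
    rw [ha, hb, hs]; exact binet m
  have hq : (9:ℝ) * ((B n : ℝ) - (B m : ℝ)) = (d:ℝ) * ((10:ℝ) ^ k - 1) := by
    exact_mod_cast heq
  set E : ℝ := b ^ n + a ^ m - b ^ m - 4 * s * (d:ℝ) / 9 with hE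
  have hkey : (10:ℝ) ^ k * (4 * (d:ℝ) * s / 9) = a ^ n - E := by
    rw [hE]
    linear_combination (-(4*s/9)) * hq + hBn - hBm
  have hd1' : (1:ℝ) ≤ (d:ℝ) := by exact_mod_cast hd1
  have hd9' : (d:ℝ) ≤ 9 := by exact_mod_cast hd9
  have hbn0 : (0:ℝ) < b ^ n := pow_pos hb0 n
  have hbm0 : (0:ℝ) < b ^ m := pow_pos hb0 m
  have hbm1 : b ^ m ≤ 1 := pow_le_one₀ hb0.le (by linarith)
  have hbn_le : b ^ n ≤ b := by
    have := pow_le_pow_of_le_one hb0.le (by linarith : b ≤ 1) (show 1 ≤ n by omega)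
    simpa using this
  have hEbound : |E| < 4 * a ^ m := by
    rw [hE, abs_lt]
    rcases Nat.eq_zero_or_pos m with hm | hm
    · subst hm
      simp only [pow_zero]
      rcases le_or_gt d 6 with hd6 | hd6
      · have hd6' : (d:ℝ) ≤ 6 := by exact_mod_cast hd6
        have h6d : (0:ℝ) ≤ 6 - (d:ℝ) := by linarith
        have hsd : (0:ℝ) ≤ s * (d:ℝ) := mul_nonneg hs0 (by linarith)
        constructor
        · nlinarith [mul_nonneg hs0 h6d]
        · nlinarith
      · exfalso
        have heq' : 9 * B n = d * (10 ^ k - 1) := by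
          have hB0 : B 0 = 0 := rfl
          rw [hB0] at heq; linarith [heq]
        interval_cases d
        · have h5 : ((9 * B n : ℤ) : ZMod 5) = (((7:ℤ) * (10 ^ k - 1) : ℤ) : ZMod 5) := by
            rw [heq']
          push_cast at h5
          have h10 : ((10:ZMod 5)) ^ k = 0 := by
            rw [show (10:ZMod 5) = 0 by decide, zero_pow (by omega : k ≠ 0)]
          rw [h10] at h5
          rcases Bmod5 n with h|h|h <;> rw [h] at h5 <;> exact absurd h5 (by decide)
        · have h5 : ((9 * B n : ℤ) : ZMod 5) = (((8:ℤ) * (10 ^ k - 1) : ℤ) : ZMod 5) := by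
            rw [heq']
          push_cast at h5
          have h10 : ((10:ZMod 5)) ^ k = 0 := by
            rw [show (10:ZMod 5) = 0 by decide, zero_pow (by omega : k ≠ 0)]
          rw [h10] at h5
          rcases Bmod5 n with h|h|h <;> rw [h] at h5 <;> exact absurd h5 (by decide)
        · have hBn9 : B n = 10 ^ k - 1 :=
            mul_left_cancel₀ (by norm_num : (9:ℤ) ≠ 0) heq'
          have h6 : ((B n : ℤ) : ZMod 6) = (((10:ℤ) ^ k - 1 : ℤ) : ZMod 6) := by
            rw [hBn9]
          push_cast at h6
          rw [pow10_mod6 k (by omega)] at h6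
          rcases Bmod6 n with h|h|h <;> rw [h] at h6 <;> exact absurd h6 (by decide)
    · have ham2 : a ≤ a ^ m := le_self_pow₀ ha1.le (by omega)
      have hsd : (0:ℝ) ≤ s * (d:ℝ) := mul_nonneg hs0 (by linarith)
      have h9d : (0:ℝ) ≤ s * (9 - (d:ℝ)) := mul_nonneg hs0 (by linarith)
      constructor
      · linarith [hbn0, hbm1, ham2, h9d]
      · linarith [hbn_le, hb1, hbm0, hsd, ham2]
  rw [zpow_neg, zpow_natCast, mul_assoc ((a ^ n)⁻¹) ((10:ℝ) ^ k), hkey]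
  have hsimp : 1 - (a ^ n)⁻¹ * (a ^ n - E) = (a ^ n)⁻¹ * E := by
    rw [mul_sub, inv_mul_cancel₀ han.ne']; ring
  rw [hsimp, abs_mul, abs_of_pos (inv_pos.2 han)]
  have hn_split : a ^ (n - m) * a ^ m = a ^ n := by
    rw [← pow_add, Nat.sub_add_cancel hmn.le]
  calc (a ^ n)⁻¹ * |E| < (a ^ n)⁻¹ * (4 * a ^ m) :=
        mul_lt_mul_of_pos_left hEbound (inv_pos.2 han)
    _ = 4 / a ^ (n - m) := by
        rw [← hn_split, mul_inv, div_eq_mul_inv]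
        have h1 : (a ^ m)⁻¹ * a ^ m = 1 := inv_mul_cancel₀ ham.ne'
        calc (a ^ (n-m))⁻¹ * (a ^ m)⁻¹ * (4 * a ^ m)
            = 4 * (a ^ (n-m))⁻¹ * ((a ^ m)⁻¹ * a ^ m) := by ring
          _ = 4 * (a ^ (n-m))⁻¹ := by rw [h1, mul_one]
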